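/- arXiv:0711.1265 — 2 statements merged into one kernel-verified Lean document; each statement's English description precedes it below -/
import Mathlib

section
/- Let f : ℝ → ℝ be 2π-periodic with |f(θ)| ≤ M for all θ, where M ≥ 1, and let Ψ : ℝ → ℝ be 2π-periodic and of class C⁴. Then there exists C₀ > 0, depending only on M and ‖Ψ‖_{C⁴}, such that for all ε ∈ (0, 1/(2M)]: sup_{θ ∈ [0,2π]} | Σ_{n=1}^∞ [ 1 − ((1−εM)/(1+εf(θ)))^n − ε n (M + f(θ)) ] ( â_n(Ψ) cos nθ + b̂_n(Ψ) sin nθ ) | ≤ C₀ ε². -/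
open Real MeasureTheory Set Filter

/-- Fourier cosine coefficient `â_n(g) = (1/π)∫₀^{2π} g(θ) cos(nθ) dθ`. -/
noncomputable def aHat (g : ℝ → ℝ) (n : ℕ) : ℝ :=
  (1 / π) * ∫ θ in (0:ℝ)..(2 * π), g θ * Real.cos (n * θ)

/-- Fourier sine coefficient `b̂_n(g) = (1/π)∫₀^{2π} g(θ) sin(nθ) dθ`. -/
noncomputable def bHat (g : ℝ → ℝ) (n : ℕ) : ℝ :=
  (1 / π) * ∫ θ in (0:ℝ)..(2 * π), g θ * Real.sin (n * θ)

/-- Dirichlet-to-Neumann operator of the unit disk for exterior harmonic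
functions: `N₀(Ψ)(θ) = −Σ_{n≥1} n (â_n(Ψ) cos nθ + b̂_n(Ψ) sin nθ)`. -/
noncomputable def N0 (Ψ : ℝ → ℝ) (θ : ℝ) : ℝ :=
  -∑' n : ℕ, ((n : ℝ) + 1) *
    (aHat Ψ (n + 1) * Real.cos (((n : ℝ) + 1) * θ) +
     bHat Ψ (n + 1) * Real.sin (((n : ℝ) + 1) * θ))

/-- `D₀(Ψ)(θ) = −Σ_{n≥1} (n+1)(â_n(Ψ) cos nθ + b̂_n(Ψ) sin nθ)`. -/
noncomputable def D0 (Ψ : ℝ → ℝ) (θ : ℝ) : ℝ :=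
  -∑' n : ℕ, ((n : ℝ) + 2) *
    (aHat Ψ (n + 1) * Real.cos (((n : ℝ) + 1) * θ) +
     bHat Ψ (n + 1) * Real.sin (((n : ℝ) + 1) * θ))

/-- `u` is harmonic on `s ⊆ ℝ²`: twice continuously differentiable with
vanishing Laplacian `∂²u/∂x² + ∂²u/∂y² = 0` on `s`. -/
def HarmonicOnSet (u : ℝ × ℝ → ℝ) (s : Set (ℝ × ℝ)) : Prop :=
  ContDiffOn ℝ 2 u s ∧ ∀ x ∈ s,
    iteratedFDeriv ℝ 2 u x ![((1:ℝ), (0:ℝ)), ((1:ℝ), (0:ℝ))] +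
      iteratedFDeriv ℝ 2 u x ![((0:ℝ), (1:ℝ)), ((0:ℝ), (1:ℝ))] = 0

/-- The closed perturbed disk `D̄_ε` with boundary
`{(1+εf(θ))(cos θ, sin θ)}`. -/
def Dbar (ε : ℝ) (f : ℝ → ℝ) : Set (ℝ × ℝ) :=
  {x | ∃ ρ θ : ℝ, 0 ≤ ρ ∧ ρ ≤ 1 + ε * f θ ∧
    x = (ρ * Real.cos θ, ρ * Real.sin θ)}

/-- Sup norm of `|g|` over `[0, 2π]`. -/
noncomputable def supIcc (g : ℝ → ℝ) : ℝ :=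
  ⨆ θ ∈ Set.Icc (0:ℝ) (2 * π), |g θ|

/-- `‖Ψ‖_{C⁴}`: max of the sup norms of `Ψ` and its first four derivatives. -/
noncomputable def C4norm (Ψ : ℝ → ℝ) : ℝ :=
  ⨆ i ∈ Finset.range 5, supIcc (iteratedDeriv i Ψ)

/-- `M = max(‖f‖_∞, ‖f'‖_∞, 1)`. -/
noncomputable def Mconst (f : ℝ → ℝ) : ℝ :=
  max (max (supIcc f) (supIcc (deriv f))) 1

/-- `u₀^{εM}(r,θ) = Σ_{n≥0} ((1−εM)/r)^n (â_n(Ψ) cos nθ + b̂_n(Ψ) sin nθ)`. -/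
noncomputable def u0eM (Ψ : ℝ → ℝ) (ε M r θ : ℝ) : ℝ :=
  ∑' n : ℕ, ((1 - ε * M) / r) ^ n *
    (aHat Ψ n * Real.cos (n * θ) + bHat Ψ n * Real.sin (n * θ))

/-- `u₁^{εM}(r,θ) = −Σ_{n≥0} ((1−εM)/r)^n (â_n((f+M)N₀Ψ) cos nθ + b̂_n((f+M)N₀Ψ) sin nθ)`. -/
noncomputable def u1eM (f Ψ : ℝ → ℝ) (ε M r θ : ℝ) : ℝ :=
  -∑' n : ℕ, ((1 - ε * M) / r) ^ n *
    (aHat (fun t => (f t + M) * N0 Ψ t) n * Real.cos (n * θ) +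
     bHat (fun t => (f t + M) * N0 Ψ t) n * Real.sin (n * θ))

/-- `u₀(r,θ) = Σ_{n≥0} r^{−n} (â_n(Ψ) cos nθ + b̂_n(Ψ) sin nθ)`. -/
noncomputable def u0ser (Ψ : ℝ → ℝ) (r θ : ℝ) : ℝ :=
  ∑' n : ℕ, r ^ (-(n : ℤ)) *
    (aHat Ψ n * Real.cos (n * θ) + bHat Ψ n * Real.sin (n * θ))

/-!
With `q = (1 - εM) / (1 + εf(θ)) ∈ [0, 1]` one has `1 - q = ε(M + f(θ)) + O(ε²)` and
`1 - q = O(ε)`, so the second-order bound `|1 - qᵐ - m(1 - q)| ≤ m²(1 - q)²` makes the `m`-th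
multiplier `O(m²ε²)`. Four integrations by parts bound the `m`-th Fourier mode of the periodic
`C⁴` function `Ψ` by `O(‖Ψ⁗‖∞ / m⁴)`, so the series is dominated by `ε² ∑ 1/m² = ε² π²/6`.
-/
theorem abs_one_sub_pow_sub_mul_le {q : ℝ} (h0 : 0 ≤ q) (h1 : q ≤ 1) (m : ℕ) :
    |1 - q ^ m - m * (1 - q)| ≤ m ^ 2 * (1 - q) ^ 2 := by
  induction m with
  | zero => simp
  | succ m ih =>
    have hstep : 1 - q ^ (m + 1) - (m + 1 : ℕ) * (1 - q)
        = q * (1 - q ^ m - m * (1 - q)) - m * (1 - q) ^ 2 := by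
      push_cast; ring
    rw [hstep]
    rw [abs_le] at ih ⊢
    have hm : (0 : ℝ) ≤ m := m.cast_nonneg
    have hsq : 0 ≤ (1 - q) ^ 2 := sq_nonneg _
    push_cast
    constructor <;> nlinarith [mul_nonneg hm hsq, mul_nonneg (mul_nonneg hm hm) hsq]

theorem abs_one_sub_div_sub_le {M ε F : ℝ} (hF : |F| ≤ M) (hε : 0 ≤ ε)
    (hεM : ε * M ≤ 1 / 2) :
    |1 - (1 - ε * M) / (1 + ε * F) - ε * (M + F)| ≤ 4 * M ^ 2 * ε ^ 2 := by
  obtain ⟨hFl, hFu⟩ := abs_le.mp hF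
  have hden : 1 / 2 ≤ 1 + ε * F := by nlinarith
  have hden0 : 0 < 1 + ε * F := by linarith
  have hMF : |M + F| * |F| ≤ 2 * M * M :=
    mul_le_mul (abs_le.mpr ⟨by linarith, by linarith⟩) hF (abs_nonneg _) (by linarith)
  rw [show 1 - (1 - ε * M) / (1 + ε * F) - ε * (M + F)
      = -(ε ^ 2 * ((M + F) * F) / (1 + ε * F)) by field_simp; ring,
    abs_neg, abs_div, abs_of_pos hden0, div_le_iff₀ hden0, abs_mul, abs_mul,
    abs_of_nonneg (sq_nonneg ε)]
  nlinarith [mul_le_mul_of_nonneg_left hMF (sq_nonneg ε),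
    mul_le_mul_of_nonneg_left hden (by positivity : (0:ℝ) ≤ 4 * M ^ 2 * ε ^ 2)]

theorem abs_one_sub_div_pow_sub_le {M ε F : ℝ} (hF : |F| ≤ M) (hε : 0 ≤ ε)
    (hεM : ε * M ≤ 1 / 2) (m : ℕ) :
    |1 - ((1 - ε * M) / (1 + ε * F)) ^ m - ε * m * (M + F)| ≤ 20 * M ^ 2 * m ^ 2 * ε ^ 2 := by
  obtain ⟨hFl, hFu⟩ := abs_le.mp hF
  have hden0 : 0 < 1 + ε * F := by nlinarith
  have hlin := abs_one_sub_div_sub_le hF hε hεM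
  set q := (1 - ε * M) / (1 + ε * F)
  have hq0 : 0 ≤ q := div_nonneg (by nlinarith) hden0.le
  have hq1 : q ≤ 1 := (div_le_one hden0).mpr (by nlinarith)
  have h1qle : 1 - q ≤ 4 * M * ε := by
    have hM0 : 0 ≤ M := (abs_nonneg F).trans hF
    nlinarith [(abs_le.mp hlin).2, mul_le_mul_of_nonneg_left hFu hε,
      mul_le_mul_of_nonneg_left hεM (by positivity : (0:ℝ) ≤ 4 * M * ε)]
  have hgeom : |1 - q ^ m - m * (1 - q)| ≤ 16 * M ^ 2 * m ^ 2 * ε ^ 2 := calc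
    |1 - q ^ m - m * (1 - q)| ≤ m ^ 2 * (1 - q) ^ 2 := abs_one_sub_pow_sub_mul_le hq0 hq1 m
    _ ≤ m ^ 2 * (4 * M * ε) ^ 2 := by gcongr
    _ = 16 * M ^ 2 * m ^ 2 * ε ^ 2 := by ring
  have hm : (m : ℝ) ≤ m ^ 2 := by
    rcases m with _ | m
    · simp
    · push_cast; nlinarith
  calc |1 - q ^ m - ε * m * (M + F)|
      = |(1 - q ^ m - m * (1 - q)) + m * (1 - q - ε * (M + F))| := by ring_nf
    _ ≤ 16 * M ^ 2 * m ^ 2 * ε ^ 2 + m * (4 * M ^ 2 * ε ^ 2) := by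
      refine (abs_add_le _ _).trans (add_le_add hgeom ?_)
      rw [abs_mul, Nat.abs_cast]
      exact mul_le_mul_of_nonneg_left hlin m.cast_nonneg
    _ ≤ 20 * M ^ 2 * m ^ 2 * ε ^ 2 := by
      nlinarith [mul_le_mul_of_nonneg_left hm (by positivity : (0:ℝ) ≤ 4 * M ^ 2 * ε ^ 2)]

theorem Function.Periodic.deriv {𝕜 F : Type*} [NontriviallyNormedField 𝕜] [NormedAddCommGroup F]
    [NormedSpace 𝕜 F] {g : 𝕜 → F} {c : 𝕜} (h : Function.Periodic g c) :
    Function.Periodic (deriv g) c := fun x => by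
  rw [← deriv_comp_add_const, funext h]

section FourierCoefficients

variable {g : ℝ → ℝ} {m : ℕ}

theorem aHat_eq_neg_bHat_deriv_div (hg : ContDiff ℝ 1 g) (hm : m ≠ 0) :
    aHat g m = -bHat (deriv g) m / m := by
  have hm' : (m : ℝ) ≠ 0 := Nat.cast_ne_zero.mpr hm
  have hsin : ∀ x ∈ uIcc 0 (2 * π),
      HasDerivAt (fun y => Real.sin (m * y) / m) (Real.cos (m * x)) x := fun x _ =>
    (((hasDerivAt_id' x).const_mul (m : ℝ)).sin.div_const (m : ℝ)).congr_deriv (by field_simp)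
  have ibp := intervalIntegral.integral_mul_deriv_eq_deriv_mul
    (fun x _ => (hg.differentiable one_ne_zero x).hasDerivAt) hsin
    ((hg.continuous_deriv le_rfl).intervalIntegrable _ _)
    ((by fun_prop : Continuous fun x : ℝ => Real.cos (m * x)).intervalIntegrable _ _)
  simp only [mul_div_assoc'] at ibp
  rw [aHat, bHat, ibp, Real.sin_periodic.nat_mul_eq, mul_zero, Real.sin_zero,
    intervalIntegral.integral_div]
  ring

theorem bHat_eq_aHat_deriv_div (hg : ContDiff ℝ 1 g) (hper : Function.Periodic g (2 * π))
    (hm : m ≠ 0) : bHat g m = aHat (deriv g) m / m := by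
  have hm' : (m : ℝ) ≠ 0 := Nat.cast_ne_zero.mpr hm
  have hcos : ∀ x ∈ uIcc 0 (2 * π),
      HasDerivAt (fun y => -(Real.cos (m * y) / m)) (Real.sin (m * x)) x := fun x _ =>
    (((hasDerivAt_id' x).const_mul (m : ℝ)).cos.div_const (m : ℝ)).neg.congr_deriv
      (by field_simp)
  have ibp := intervalIntegral.integral_mul_deriv_eq_deriv_mul
    (fun x _ => (hg.differentiable one_ne_zero x).hasDerivAt) hcos
    ((hg.continuous_deriv le_rfl).intervalIntegrable _ _)
    ((by fun_prop : Continuous fun x : ℝ => Real.sin (m * x)).intervalIntegrable _ _)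
  simp only [mul_neg, mul_div_assoc'] at ibp
  rw [bHat, aHat, ibp, Real.cos_nat_mul_two_pi, mul_zero, Real.cos_zero,
    intervalIntegral.integral_neg, intervalIntegral.integral_div, hper.eq]
  ring

theorem aHat_eq_neg_aHat_deriv_deriv_div (hg : ContDiff ℝ 2 g)
    (hper : Function.Periodic g (2 * π)) (hm : m ≠ 0) :
    aHat g m = -aHat (deriv (deriv g)) m / m ^ 2 := by
  rw [aHat_eq_neg_bHat_deriv_div (hg.of_le one_le_two) hm,
    bHat_eq_aHat_deriv_div (ContDiff.deriv' (n := 1) hg) hper.deriv hm]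
  ring

theorem bHat_eq_neg_bHat_deriv_deriv_div (hg : ContDiff ℝ 2 g)
    (hper : Function.Periodic g (2 * π)) (hm : m ≠ 0) :
    bHat g m = -bHat (deriv (deriv g)) m / m ^ 2 := by
  rw [bHat_eq_aHat_deriv_div (hg.of_le one_le_two) hper hm,
    aHat_eq_neg_bHat_deriv_div (ContDiff.deriv' (n := 1) hg) hm]
  ring

theorem aHat_eq_aHat_iteratedDeriv_four_div (hg : ContDiff ℝ 4 g)
    (hper : Function.Periodic g (2 * π)) (hm : m ≠ 0) :
    aHat g m = aHat (iteratedDeriv 4 g) m / m ^ 4 := by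
  have hg₂ : ContDiff ℝ 2 (deriv (deriv g)) := ContDiff.iterate_deriv' 2 2 hg
  rw [aHat_eq_neg_aHat_deriv_deriv_div (hg.of_le (by norm_num)) hper hm,
    aHat_eq_neg_aHat_deriv_deriv_div hg₂ hper.deriv.deriv hm, iteratedDeriv_eq_iterate]
  simp only [Function.iterate_succ, Function.iterate_zero, Function.comp_apply, Function.id_def]
  ring

theorem bHat_eq_bHat_iteratedDeriv_four_div (hg : ContDiff ℝ 4 g)
    (hper : Function.Periodic g (2 * π)) (hm : m ≠ 0) :
    bHat g m = bHat (iteratedDeriv 4 g) m / m ^ 4 := by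
  have hg₂ : ContDiff ℝ 2 (deriv (deriv g)) := ContDiff.iterate_deriv' 2 2 hg
  rw [bHat_eq_neg_bHat_deriv_deriv_div (hg.of_le (by norm_num)) hper hm,
    bHat_eq_neg_bHat_deriv_deriv_div hg₂ hper.deriv.deriv hm, iteratedDeriv_eq_iterate]
  simp only [Function.iterate_succ, Function.iterate_zero, Function.comp_apply, Function.id_def]
  ring

theorem abs_inv_pi_mul_integral_mul_le {h : ℝ → ℝ} {B : ℝ}
    (hg : ∀ x ∈ Icc 0 (2 * π), |g x| ≤ B) (hh : ∀ x, |h x| ≤ 1) :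
    |1 / π * ∫ x in (0)..(2 * π), g x * h x| ≤ 2 * B := by
  have hI : ‖∫ x in (0)..(2 * π), g x * h x‖ ≤ B * |2 * π - 0| := by
    refine intervalIntegral.norm_integral_le_of_norm_le_const fun x hx => ?_
    rw [uIoc_of_le (by positivity)] at hx
    rw [Real.norm_eq_abs, abs_mul]
    exact (mul_le_of_le_one_right (abs_nonneg _) (hh x)).trans (hg x (Ioc_subset_Icc_self hx))
  rw [Real.norm_eq_abs, sub_zero, abs_of_pos two_pi_pos] at hI
  rw [abs_mul, abs_of_pos (by positivity), div_mul_eq_mul_div, one_mul, div_le_iff₀ pi_pos]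
  linarith

theorem abs_aHat_le {B : ℝ} (hg : ∀ x ∈ Icc 0 (2 * π), |g x| ≤ B) (m : ℕ) :
    |aHat g m| ≤ 2 * B :=
  abs_inv_pi_mul_integral_mul_le hg fun _ => abs_cos_le_one _

theorem abs_bHat_le {B : ℝ} (hg : ∀ x ∈ Icc 0 (2 * π), |g x| ≤ B) (m : ℕ) :
    |bHat g m| ≤ 2 * B :=
  abs_inv_pi_mul_integral_mul_le hg fun _ => abs_sin_le_one _

theorem abs_fourierMode_le {B : ℝ} (hg : ContDiff ℝ 4 g) (hper : Function.Periodic g (2 * π))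
    (hB : ∀ x ∈ Icc 0 (2 * π), |iteratedDeriv 4 g x| ≤ B) (hm : m ≠ 0) (θ : ℝ) :
    |aHat g m * Real.cos (m * θ) + bHat g m * Real.sin (m * θ)| ≤ 4 * B / m ^ 4 := by
  have hm4 : (0 : ℝ) < m ^ 4 := by positivity
  have ha : |aHat g m| ≤ 2 * B / m ^ 4 := by
    rw [aHat_eq_aHat_iteratedDeriv_four_div hg hper hm, abs_div, abs_of_pos hm4]
    exact div_le_div_of_nonneg_right (abs_aHat_le hB m) hm4.le
  have hb : |bHat g m| ≤ 2 * B / m ^ 4 := by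
    rw [bHat_eq_bHat_iteratedDeriv_four_div hg hper hm, abs_div, abs_of_pos hm4]
    exact div_le_div_of_nonneg_right (abs_bHat_le hB m) hm4.le
  calc |aHat g m * Real.cos (m * θ) + bHat g m * Real.sin (m * θ)|
      ≤ |aHat g m| * 1 + |bHat g m| * 1 := by
        refine (abs_add_le _ _).trans ?_
        rw [abs_mul, abs_mul]
        gcongr
        exacts [abs_cos_le_one _, abs_sin_le_one _]
    _ = |aHat g m| + |bHat g m| := by ring
    _ ≤ 2 * B / m ^ 4 + 2 * B / m ^ 4 := add_le_add ha hb
    _ = 4 * B / m ^ 4 := by ring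

end FourierCoefficients

theorem hasSum_one_div_nat_add_one_sq :
    HasSum (fun n : ℕ => 1 / ((n : ℝ) + 1) ^ 2) (π ^ 2 / 6) := by
  simpa using (hasSum_nat_add_iff' 1).mpr hasSum_zeta_two

theorem termI_estimate_general
    (f Ψ : ℝ → ℝ) (M : ℝ) (hM : 1 ≤ M)
    (hfbd : ∀ θ : ℝ, |f θ| ≤ M)
    (hΨper : Function.Periodic Ψ (2 * π)) (hΨ : ContDiff ℝ 4 Ψ) :
    ∃ C₀ > (0:ℝ), ∀ ε : ℝ, 0 < ε → ε ≤ 1 / (2 * M) →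
      ∀ θ ∈ Set.Icc (0:ℝ) (2 * π),
        |∑' n : ℕ, (1 - ((1 - ε * M) / (1 + ε * f θ)) ^ (n + 1)
              - ε * ((n : ℝ) + 1) * (M + f θ)) *
            (aHat Ψ (n + 1) * Real.cos (((n : ℝ) + 1) * θ) +
             bHat Ψ (n + 1) * Real.sin (((n : ℝ) + 1) * θ))|
          ≤ C₀ * ε ^ 2 := by
  obtain ⟨B, hB⟩ := isCompact_Icc.exists_bound_of_continuousOn
    (hΨ.continuous_iteratedDeriv 4 le_rfl).continuousOn (s := Icc 0 (2 * π))
  have hB' : ∀ x ∈ Icc 0 (2 * π), |iteratedDeriv 4 Ψ x| ≤ max B 1 :=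
    fun x hx => (hB x hx).trans (le_max_left _ _)
  have hM0 : 0 < M := by linarith
  refine ⟨80 * M ^ 2 * max B 1 * (π ^ 2 / 6), by positivity, fun ε hε hεle θ _ => ?_⟩
  have hεM : ε * M ≤ 1 / 2 := calc
    ε * M ≤ 1 / (2 * M) * M := by gcongr
    _ = 1 / 2 := by field_simp
  rw [show 80 * M ^ 2 * max B 1 * (π ^ 2 / 6) * ε ^ 2
      = 80 * M ^ 2 * max B 1 * ε ^ 2 * (π ^ 2 / 6) by ring]
  refine tsum_of_norm_bounded (E := ℝ) (hasSum_one_div_nat_add_one_sq.mul_left _) fun n => ?_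
  have hcoef := abs_one_sub_div_pow_sub_le (hfbd θ) hε.le hεM (n + 1)
  have hmode := abs_fourierMode_le hΨ hΨper hB' n.succ_ne_zero θ
  push_cast at hcoef hmode
  rw [Real.norm_eq_abs, abs_mul]
  calc _ ≤ 20 * M ^ 2 * ((n : ℝ) + 1) ^ 2 * ε ^ 2 * (4 * max B 1 / ((n : ℝ) + 1) ^ 4) :=
        mul_le_mul hcoef hmode (abs_nonneg _) (by positivity)
    _ = 80 * M ^ 2 * max B 1 * ε ^ 2 * (1 / ((n : ℝ) + 1) ^ 2) := by
        field_simp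
        ring

/-- the term `I` in the proof of the key lemma is `O(ε²)`. -/
theorem termI_estimate
    (f Ψ : ℝ → ℝ) (M : ℝ) (hM : 1 ≤ M)
    (hfper : Function.Periodic f (2 * π)) (hfbd : ∀ θ : ℝ, |f θ| ≤ M)
    (hΨper : Function.Periodic Ψ (2 * π)) (hΨ : ContDiff ℝ 4 Ψ) :
    ∃ C₀ > (0:ℝ), ∀ ε : ℝ, 0 < ε → ε ≤ 1 / (2 * M) →
      ∀ θ ∈ Set.Icc (0:ℝ) (2 * π),
        |∑' n : ℕ, (1 - ((1 - ε * M) / (1 + ε * f θ)) ^ (n + 1)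
              - ε * ((n : ℝ) + 1) * (M + f θ)) *
            (aHat Ψ (n + 1) * Real.cos (((n : ℝ) + 1) * θ) +
             bHat Ψ (n + 1) * Real.sin (((n : ℝ) + 1) * θ))|
          ≤ C₀ * ε ^ 2 :=
  termI_estimate_general f Ψ M hM hfbd hΨper hΨ
end

section
/- Let M ≥ 1, and let f : ℝ → ℝ be 2π-periodic with |f(θ)| ≤ M for all θ. Then there exists C > 0, depending only on M, such that for all ε ∈ (0, 1/(2M)] and all θ ∈ [0,2π]: Σ_{n=1}^∞ (1/n²) [ 1 − ((1−εM)/(1+εf(θ)))^n ]² ≤ C ε. -/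
/-! With `q = (1 - εM)/(1 + εf(θ)) ∈ [0, 1]` one has `1 - q ≤ 4Mε`, and Bernoulli's inequality
bounds the `n`-th term by `min((1 - q)², 1/n²)`. Splitting at `n ≈ 1/(1 - q)` shows that these
minima sum to `O(1 - q)`; the split is encoded in the telescoping bound
`min(d², 1/(x+1)²) ≤ 4 (1/(x + 1/d) - 1/(x + 1 + 1/d))`. -/


open Real MeasureTheory Set Filter

open Finset

lemma min_sq_one_div_sq_le_telescope {d x : ℝ} (hd : 0 < d) (hx : 0 ≤ x) :
    min (d ^ 2) (1 / (x + 1) ^ 2) ≤ 4 * (1 / (x + d⁻¹) - 1 / (x + 1 + d⁻¹)) := by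
  have ht : 0 < d⁻¹ := inv_pos.2 hd
  have hdiff : 1 / (x + d⁻¹) - 1 / (x + 1 + d⁻¹) = 1 / ((x + d⁻¹) * (x + 1 + d⁻¹)) := by
    field_simp
    ring
  rw [hdiff, mul_one_div]
  -- `(x + d⁻¹)(x + 1 + d⁻¹) ≤ 4 max(d⁻¹, x + 1)²`
  rcases le_total d⁻¹ (x + 1) with h | h
  · refine (min_le_right _ _).trans ?_
    rw [div_le_div_iff₀ (by positivity) (by positivity)]
    nlinarith
  · have hd2 : d ^ 2 = 1 / d⁻¹ ^ 2 := by field_simp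
    refine (min_le_left _ _).trans ?_
    rw [hd2, div_le_div_iff₀ (by positivity) (by positivity)]
    nlinarith

lemma sum_range_min_sq_one_div_sq_le {d : ℝ} (hd : 0 ≤ d) (N : ℕ) :
    ∑ n ∈ range N, min (d ^ 2) (1 / ((n : ℝ) + 1) ^ 2) ≤ 4 * d := by
  rcases hd.eq_or_lt with rfl | hd
  · refine (sum_nonpos fun n _ => (min_le_left _ _).trans_eq ?_).trans_eq ?_ <;> simp
  set g : ℕ → ℝ := fun n => 1 / ((n : ℝ) + d⁻¹)
  calc ∑ n ∈ range N, min (d ^ 2) (1 / ((n : ℝ) + 1) ^ 2)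
      ≤ ∑ n ∈ range N, 4 * (g n - g (n + 1)) :=
        sum_le_sum fun n _ => by
          simpa [g, add_assoc] using min_sq_one_div_sq_le_telescope hd n.cast_nonneg
    _ = 4 * (g 0 - g N) := by rw [← mul_sum, sum_range_sub']
    _ ≤ 4 * d := by
        have : 0 ≤ g N := by positivity
        simp only [g, Nat.cast_zero, zero_add, one_div, inv_inv] at this ⊢
        linarith

lemma one_sub_pow_le_mul_one_sub {q : ℝ} (hq : -1 ≤ q) (n : ℕ) : 1 - q ^ n ≤ n * (1 - q) := by
  have := one_add_mul_le_pow (a := q - 1) (by linarith) n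
  rw [add_sub_cancel] at this
  linarith

lemma one_div_sq_mul_one_sub_pow_sq_le_min {q : ℝ} (hq0 : 0 ≤ q) (hq1 : q ≤ 1) (n : ℕ) :
    1 / ((n : ℝ) + 1) ^ 2 * (1 - q ^ (n + 1)) ^ 2 ≤ min ((1 - q) ^ 2) (1 / ((n : ℝ) + 1) ^ 2) := by
  have hpow0 : 0 ≤ 1 - q ^ (n + 1) := sub_nonneg.2 (pow_le_one₀ hq0 hq1)
  have hpow1 : 1 - q ^ (n + 1) ≤ 1 := by linarith [pow_nonneg hq0 (n + 1)]
  have hbern : 1 - q ^ (n + 1) ≤ ((n : ℝ) + 1) * (1 - q) := by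
    exact_mod_cast one_sub_pow_le_mul_one_sub (by linarith) (n + 1)
  refine le_min ?_ ?_
  · rw [one_div_mul_eq_div, div_le_iff₀ (by positivity)]
    nlinarith
  · exact mul_le_of_le_one_right (by positivity) (pow_le_one₀ hpow0 hpow1)

lemma tsum_one_div_sq_mul_one_sub_pow_sq_le {q : ℝ} (hq0 : 0 ≤ q) (hq1 : q ≤ 1) :
    ∑' n : ℕ, 1 / ((n : ℝ) + 1) ^ 2 * (1 - q ^ (n + 1)) ^ 2 ≤ 4 * (1 - q) :=
  Real.tsum_le_of_sum_range_le (fun n => by positivity) fun N =>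
    (sum_le_sum fun n _ => one_div_sq_mul_one_sub_pow_sq_le_min hq0 hq1 n).trans
      (sum_range_min_sq_one_div_sq_le (sub_nonneg.2 hq1) N)

/-- `Σ_{n≥1} n^{-2} [1 − ((1−εM)/(1+εf))^n]² ≤ C ε`,
with `C` depending only on `M`. -/
theorem key_sum_estimate (M : ℝ) (hM : 1 ≤ M) :
    ∃ C > (0:ℝ), ∀ f : ℝ → ℝ,
      Function.Periodic f (2 * π) → (∀ θ : ℝ, |f θ| ≤ M) →
      ∀ ε : ℝ, 0 < ε → ε ≤ 1 / (2 * M) →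
        ∀ θ ∈ Set.Icc (0:ℝ) (2 * π),
          ∑' n : ℕ, (1 / ((n : ℝ) + 1) ^ 2) *
              (1 - ((1 - ε * M) / (1 + ε * f θ)) ^ (n + 1)) ^ 2
            ≤ C * ε := by
  refine ⟨16 * M, by positivity, fun f _ hf ε hε hεle θ _ => ?_⟩
  have hεM : ε * M ≤ 1 / 2 := by
    rw [le_div_iff₀ (by positivity)] at hεle
    linarith
  obtain ⟨hfl, hfu⟩ := abs_le.1 (hf θ)
  have hεf : -(ε * M) ≤ ε * f θ := by nlinarith
  have hden : 1 / 2 ≤ 1 + ε * f θ := by linarith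
  set q := (1 - ε * M) / (1 + ε * f θ)
  have hq : q * (1 + ε * f θ) = 1 - ε * M := div_mul_cancel₀ _ (by linarith)
  have hq0 : 0 ≤ q := div_nonneg (by linarith) (by linarith)
  have hq1 : q ≤ 1 := (div_le_one (by linarith)).2 (by linarith)
  -- `1 - q = ε (f θ + M) / (1 + ε f θ) ≤ 2εM / (1/2)`
  have hq_close : 1 - q ≤ 4 * M * ε := by nlinarith
  calc _ ≤ 4 * (1 - q) := tsum_one_div_sq_mul_one_sub_pow_sq_le hq0 hq1
    _ ≤ 16 * M * ε := by linarith
end
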